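/- Let (F, <_F) and (G, <_G) be ordered groups. Then there exists a bi-invariant strict total order ≺ on F * G extending <_F and <_G along the canonical inclusions, such that the kernel of the canonical homomorphism α : F * G → F × G is a convex subgroup of (F * G, ≺). -/

import Mathlib

/-!
The order is lexicographic along `1 → K → F * G → F × G → 1`, where `K` is the kernel of `α`:
`w` is positive if `α w` is positive in the lexicographic order of `F × G`, or if `α w = 1` and
`w` is positive in an order of `K` that is invariant under conjugation by all of `F * G`.
Such a lexicographic order automatically has `K` as a convex subgroup.

The order on `K` comes from a Magnus-type representation `Φ` of `F * G` in the units of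
`A⟦X⟧`, where `A = ℤ[M]` and `M` is the monoid of words `h₀ s₁ h₁ ⋯ sₙ hₙ` with entries
`hᵢ ∈ F × G` and separators `sᵢ ∈ Bool`. With `u_s = 1 + X s`, `Φ` sends `f ∈ F` to
`u_true⁻¹ (f, 1) u_true` and `g ∈ G` to `u_false⁻¹ (1, g) u_false`. The constant coefficient of
`Φ w` is `α w`, so for `w ∈ K` the series `Φ w - 1` has a lowest nonzero coefficient in `A`, and
`w` is positive when the coefficient of the largest word of `M` in it is positive, `M` being
ordered lexicographically, separators first. Conjugating `w` by `γ` multiplies that coefficient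
on both sides by `α γ`, which is order-preserving on `M`.

`Φ` is injective: for a reduced word `w = x₁ ⋯ xₙ` the coefficient of `Xⁿ` in `Φ w` at the word
`x₁ s₁ x₂ s₂ ⋯ xₙ sₙ` is `1`, since the separators `s₁ ⋯ sₙ` alternate and therefore each letter
has to contribute exactly one of them.
-/

/-- A bi-invariant strict total order on a group. -/
def IsBiOrder {G : Type*} [Group G] (lt : G → G → Prop) : Prop :=
  IsStrictTotalOrder G lt ∧ (∀ x y z : G, lt x y → lt (x * z) (y * z)) ∧
    (∀ x y z : G, lt x y → lt (z * x) (z * y))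

/-- The canonical homomorphism `F * G → F × G` induced by the inclusions
`F → F × G` and `G → F × G`. -/
def canonicalMap (F G : Type*) [Group F] [Group G] : Monoid.Coprod F G →* F × G :=
  Monoid.Coprod.lift (MonoidHom.inl F G) (MonoidHom.inr F G)

structure IsPositiveCone {E : Type*} [Group E] (N : Subgroup E) (P : E → Prop) : Prop where
  not_one : ¬ P 1
  mul : ∀ {a b}, a ∈ N → b ∈ N → P a → P b → P (a * b)
  conj : ∀ {a} (g : E), a ∈ N → P a → P (g * a * g⁻¹)
  total : ∀ {a}, a ∈ N → a ≠ 1 → P a ∨ P a⁻¹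

namespace IsPositiveCone

variable {E Q : Type*} [Group E] [Group Q] {N : Subgroup E} {P : E → Prop}

theorem not_and_inv (h : IsPositiveCone N P) {a : E} (ha : a ∈ N) (hpos : P a) (hinv : P a⁻¹) :
    False :=
  h.not_one (by simpa using h.mul ha (inv_mem ha) hpos hinv)

theorem isBiOrder (h : IsPositiveCone ⊤ P) : IsBiOrder fun x y => P (x⁻¹ * y) := by
  refine ⟨{ trichotomous := ?_, irrefl := ?_, trans := ?_ }, ?_, ?_⟩
  · intro x y hxy hyx
    by_contra hne
    refine (h.total (Subgroup.mem_top _) ?_).elim hxy (by simpa using hyx)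
    rwa [Ne, inv_mul_eq_one]
  · intro x hx
    exact h.not_one (by simpa using hx)
  · intro x y z hxy hyz
    simpa [mul_assoc] using h.mul (Subgroup.mem_top _) (Subgroup.mem_top _) hxy hyz
  · intro x y z hxy
    simpa [mul_assoc] using h.conj z⁻¹ (Subgroup.mem_top _) hxy
  · intro x y z hxy
    simpa [mul_assoc] using hxy

def lex (φ : E →* Q) (PQ : Q → Prop) (PK : E → Prop) (w : E) : Prop :=
  PQ (φ w) ∨ (φ w = 1 ∧ PK w)

variable {φ : E →* Q} {PQ : Q → Prop} {PK : E → Prop}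

theorem isPositiveCone_lex (hQ : IsPositiveCone ⊤ PQ) (hK : IsPositiveCone φ.ker PK) :
    IsPositiveCone ⊤ (lex φ PQ PK) where
  not_one := by
    rintro (h | ⟨-, h⟩)
    · exact hQ.not_one (by simpa using h)
    · exact hK.not_one h
  mul := by
    rintro a b - - (ha | ⟨ha1, ha⟩) (hb | ⟨hb1, hb⟩)
    · exact Or.inl (by simpa using hQ.mul (Subgroup.mem_top _) (Subgroup.mem_top _) ha hb)
    · exact Or.inl (by simpa [hb1] using ha)
    · exact Or.inl (by simpa [ha1] using hb)
    · exact Or.inr ⟨by simp [ha1, hb1], hK.mul ha1 hb1 ha hb⟩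
  conj := by
    rintro a g - (ha | ⟨ha1, ha⟩)
    · exact Or.inl (by simpa using hQ.conj (φ g) (Subgroup.mem_top _) ha)
    · exact Or.inr ⟨by simp [ha1], hK.conj g ha1 ha⟩
  total := by
    rintro a - ha
    by_cases ha1 : φ a = 1
    · exact (hK.total ha1 ha).imp (fun h => Or.inr ⟨ha1, h⟩)
        (fun h => Or.inr ⟨by simp [ha1], h⟩)
    · exact (hQ.total (Subgroup.mem_top _) ha1).imp Or.inl (fun h => Or.inl (by simpa using h))

theorem lex_iff (hK : IsPositiveCone φ.ker PK) {w : E}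
    (hw : φ w = 1 → w = 1) : lex φ PQ PK w ↔ PQ (φ w) := by
  refine ⟨?_, Or.inl⟩
  rintro (h | ⟨h1, h⟩)
  · exact h
  · exact absurd (hw h1 ▸ h) hK.not_one

theorem map_eq_one_of_lex_of_lex (hQ : IsPositiveCone ⊤ PQ) {c c' x : E} (hc : φ c = 1)
    (hc' : φ c' = 1) (h : lex φ PQ PK (c⁻¹ * x)) (h' : lex φ PQ PK (x⁻¹ * c')) : φ x = 1 := by
  have e : φ (c⁻¹ * x) = φ x := by simp [hc]
  have e' : φ (x⁻¹ * c') = (φ x)⁻¹ := by simp [hc']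
  rcases h with h | ⟨h, -⟩
  · rcases h' with h' | ⟨h', -⟩
    · exact (hQ.not_and_inv (Subgroup.mem_top _) (e ▸ h) (e' ▸ h')).elim
    · simpa [e'] using h'
  · rwa [e] at h

end IsPositiveCone

namespace IsBiOrder

variable {G : Type*} [Group G] {lt : G → G → Prop}

theorem lt_iff_one_lt_inv_mul (h : IsBiOrder lt) {x y : G} : lt x y ↔ lt 1 (x⁻¹ * y) :=
  ⟨fun hxy => by simpa using h.2.2 _ _ x⁻¹ hxy, fun hxy => by simpa using h.2.2 _ _ x hxy⟩

theorem isPositiveCone (h : IsBiOrder lt) : IsPositiveCone ⊤ (lt 1) := by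
  have := h.1
  refine ⟨irrefl 1, ?_, ?_, ?_⟩
  · intro a b _ _ ha hb
    exact _root_.trans ha (by simpa using h.2.2 _ _ a hb)
  · intro a g _ ha
    simpa using h.2.1 _ _ g⁻¹ (h.2.2 _ _ g ha)
  · intro a _ ha
    rcases trichotomous_of lt 1 a with h1 | h1 | h1
    · exact Or.inl h1
    · exact absurd h1.symm ha
    · exact Or.inr (by simpa using h.2.1 _ _ a⁻¹ h1)

theorem prodLex {F G : Type*} [Group F] [Group G] {ltF : F → F → Prop} {ltG : G → G → Prop}
    (hF : IsBiOrder ltF) (hG : IsBiOrder ltG) : IsBiOrder (Prod.Lex ltF ltG) := by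
  have := hF.1
  have := hG.1
  refine ⟨{}, ?_, ?_⟩
  · rintro ⟨x₁, x₂⟩ ⟨y₁, y₂⟩ ⟨z₁, z₂⟩ (⟨_, _, h⟩ | ⟨_, h⟩)
    · exact .left _ _ (hF.2.1 _ _ _ h)
    · exact .right _ (hG.2.1 _ _ _ h)
  · rintro ⟨x₁, x₂⟩ ⟨y₁, y₂⟩ ⟨z₁, z₂⟩ (⟨_, _, h⟩ | ⟨_, h⟩)
    · exact .left _ _ (hF.2.2 _ _ _ h)
    · exact .right _ (hG.2.2 _ _ _ h)

end IsBiOrder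

namespace List

variable {α : Type*}

theorem Lex.modifyHead {r : α → α → Prop} {f : α → α}
    (hf : ∀ a b, r a b → r (f a) (f b)) {l m : List α} (h : Lex r l m) :
    Lex r (l.modifyHead f) (m.modifyHead f) := by
  cases h with
  | nil => exact .nil
  | cons h => exact .cons h
  | rel h => exact .rel (hf _ _ h)

theorem Lex.append_singleton_map {r : α → α → Prop} {f : α → α}
    (hf : ∀ a b, r a b → r (f a) (f b)) :
    ∀ {l m : List α}, l.length = m.length → ∀ {a b : α},
      Lex r (l ++ [a]) (m ++ [b]) → Lex r (l ++ [f a]) (m ++ [f b])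
  | [], [], _, _, _, h => by
    rw [nil_append, nil_append, lex_singleton_iff] at h ⊢
    exact hf _ _ h
  | x :: l, y :: m, hlen, a, b, h => by
    cases h with
    | cons h => exact .cons (append_singleton_map hf (by simpa using hlen) h)
    | rel h => exact .rel h

theorem Lex.isStrictTotalOrder (r : α → α → Prop) [IsStrictTotalOrder α r] :
    IsStrictTotalOrder (List α) (Lex r) :=
  { isStrictWeakOrder_of_isOrderConnected with }

variable [DecidableEq α]

def runs : List α → ℕ
  | [] => 0
  | [_] => 1
  | a :: b :: l => (if a = b then 0 else 1) + runs (b :: l)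

theorem runs_append_le : ∀ l m : List α, runs (l ++ m) ≤ runs l + runs m
  | [], m => by simp [runs]
  | [a], [] => by simp [runs]
  | [a], b :: m => by
    simp only [cons_append, nil_append, runs]
    split_ifs <;> omega
  | a :: b :: l, m => by
    have := runs_append_le (b :: l) m
    simp only [cons_append, runs] at this ⊢
    omega

theorem runs_replicate_le (n : ℕ) (a : α) : runs (replicate n a) ≤ 1 := by
  induction n with
  | zero => simp [runs]
  | succ n ih =>
    rcases n with _ | n
    · simp [runs]
    · simpa [replicate_succ, runs] using ih

theorem runs_eq_length_of_isChain_ne : ∀ {l : List α}, l.IsChain (· ≠ ·) → runs l = l.length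
  | [], _ => rfl
  | [_], _ => rfl
  | a :: b :: l, h => by
    rw [isChain_cons_cons] at h
    simp [runs, h.1, runs_eq_length_of_isChain_ne h.2, add_comm]

end List

namespace Finsupp

variable {M R : Type*} [AddCommGroup R] [LinearOrder R] {r : M → M → Prop}

def TopCoeffPos (r : M → M → Prop) (f : M →₀ R) : Prop :=
  ∃ t, 0 < f t ∧ ∀ u, r t u → f u = 0

theorem not_topCoeffPos_zero : ¬ TopCoeffPos r (0 : M →₀ R) := by
  rintro ⟨t, ht, -⟩
  exact ht.ne' rfl

variable [IsStrictTotalOrder M r]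

theorem TopCoeffPos.add [IsOrderedAddMonoid R] {f g : M →₀ R} (hf : TopCoeffPos r f)
    (hg : TopCoeffPos r g) : TopCoeffPos r (f + g) := by
  obtain ⟨t, ht, hft⟩ := hf
  obtain ⟨t', ht', hgt'⟩ := hg
  rcases trichotomous_of r t t' with h | rfl | h
  · exact ⟨t', by simpa [hft t' h] using ht', fun u hu => by
      simp [hft u (_root_.trans h hu), hgt' u hu]⟩
  · exact ⟨t, by simpa using add_pos ht ht', fun u hu => by simp [hft u hu, hgt' u hu]⟩
  · exact ⟨t, by simpa [hgt' t h] using ht, fun u hu => by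
      simp [hft u hu, hgt' u (_root_.trans h hu)]⟩

theorem topCoeffPos_or_topCoeffPos_neg [IsOrderedAddMonoid R] {f : M →₀ R} (hf : f ≠ 0) :
    TopCoeffPos r f ∨ TopCoeffPos r (-f) := by
  classical
  let := linearOrderOfSTO r
  set t := f.support.max' (Finsupp.support_nonempty_iff.mpr hf)
  have htop : ∀ u, r t u → f u = 0 := fun u hu => by
    by_contra h
    exact not_le_of_gt hu (f.support.le_max' u (Finsupp.mem_support_iff.mpr h))
  rcases (Finsupp.mem_support_iff.mp (f.support.max'_mem _)).lt_or_gt with h | h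
  · exact Or.inr ⟨t, by simpa using h, fun u hu => by simp [htop u hu]⟩
  · exact Or.inl ⟨t, h, htop⟩

theorem TopCoeffPos.mapDomain {f : M →₀ R} (hf : TopCoeffPos r f) {e : M → M}
    (he : ∀ a b, r a b → r (e a) (e b)) : TopCoeffPos r (f.mapDomain e) := by
  have he_inj : e.Injective := fun a b hab => by
    rcases trichotomous_of r a b with h | h | h
    · exact absurd (hab ▸ he a b h) (irrefl _)
    · exact h
    · exact absurd (hab ▸ he b a h) (irrefl _)
  obtain ⟨t, ht, htop⟩ := hf
  refine ⟨e t, by rwa [mapDomain_apply he_inj], fun u hu => ?_⟩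
  by_cases hmem : u ∈ Set.range e
  · obtain ⟨v, rfl⟩ := hmem
    rw [mapDomain_apply he_inj]
    refine htop v ?_
    rcases trichotomous_of r t v with h | rfl | h
    · exact h
    · exact absurd hu (irrefl _)
    · exact absurd (_root_.trans (he v t h) hu) (irrefl _)
  · exact mapDomain_of_notMem_range _ _ hmem

end Finsupp

namespace MonoidAlgebra

variable {R M : Type*} [Semiring R] [Monoid M]

theorem single_one_mul_eq_mapDomain (m : M) (x : MonoidAlgebra R M) :
    single m 1 * x = mapDomain (m * ·) x := by
  induction x using MonoidAlgebra.induction_linear with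
  | zero => simp
  | add x y hx hy => rw [mul_add, hx, hy, mapDomain_add]
  | single t c => simp [single_mul_single, mapDomain_single]

theorem mul_single_one_eq_mapDomain (m : M) (x : MonoidAlgebra R M) :
    x * single m 1 = mapDomain (· * m) x := by
  induction x using MonoidAlgebra.induction_linear with
  | zero => simp
  | add x y hx hy => rw [add_mul, hx, hy, mapDomain_add]
  | single t c => simp [single_mul_single, mapDomain_single]

omit [Monoid M] in
theorem eq_of_coeff_single_ne_zero {a t : M} {r : R} (h : (single a r).coeff t ≠ 0) : t = a := by
  by_contra hne
  exact h (by simp [coeff_single, Ne.symm hne])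

theorem exists_mul_eq_of_coeff_mul_ne_zero {x y : MonoidAlgebra R M} {t : M}
    (h : (x * y).coeff t ≠ 0) :
    ∃ u v, x.coeff u ≠ 0 ∧ y.coeff v ≠ 0 ∧ u * v = t := by
  classical
  obtain ⟨u, hu, v, hv, huv⟩ := Finset.mem_mul.mp
    (support_coeff_mul_subset _ _ (Finsupp.mem_support_iff.mpr h))
  exact ⟨u, v, Finsupp.mem_support_iff.mp hu, Finsupp.mem_support_iff.mp hv, huv⟩

end MonoidAlgebra

namespace PowerSeries

section Ring

variable {A : Type*} [Ring A] {P : A → Prop}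

def LowestCoeffIs (P : A → Prop) (f : A⟦X⟧) : Prop :=
  ∃ (d : ℕ) (g : A⟦X⟧), f = X ^ d * g ∧ P (constantCoeff g)

theorem not_lowestCoeffIs_zero (hP : ¬ P 0) : ¬ LowestCoeffIs P (0 : A⟦X⟧) := by
  rintro ⟨d, g, hg, hpos⟩
  rw [← mul_zero (X ^ d : A⟦X⟧)] at hg
  rw [X_pow_mul_injective hg.symm, map_zero] at hpos
  exact hP hpos

theorem LowestCoeffIs.add (hP : ∀ {a b}, P a → P b → P (a + b)) {f g : A⟦X⟧}
    (hf : LowestCoeffIs P f) (hg : LowestCoeffIs P g) : LowestCoeffIs P (f + g) := by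
  obtain ⟨d, a, rfl, ha⟩ := hf
  obtain ⟨e, b, rfl, hb⟩ := hg
  wlog hde : d ≤ e generalizing d e a b
  · simpa only [add_comm] using this e b hb d a ha (le_of_not_ge hde)
  obtain ⟨k, rfl⟩ := Nat.exists_eq_add_of_le hde
  refine ⟨d, a + X ^ k * b, by rw [mul_add, pow_add, mul_assoc], ?_⟩
  rcases k with - | k
  · simpa using hP ha hb
  · simpa using ha

theorem LowestCoeffIs.mul_mul {u v f : A⟦X⟧}
    (huv : ∀ a, P a → P (constantCoeff u * a * constantCoeff v)) (hf : LowestCoeffIs P f) :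
    LowestCoeffIs P (u * f * v) := by
  obtain ⟨d, g, rfl, hg⟩ := hf
  refine ⟨d, u * g * v, ?_, by simpa using huv _ hg⟩
  simp only [← mul_assoc, (commute_X_pow u d).eq]

theorem lowestCoeffIs_or_lowestCoeffIs_neg (hP : ∀ a, a ≠ 0 → P a ∨ P (-a)) {f : A⟦X⟧}
    (hf : f ≠ 0) : LowestCoeffIs P f ∨ LowestCoeffIs P (-f) := by
  have hlead := coeff_order hf
  obtain ⟨g, hg⟩ := X_pow_order_dvd (φ := f)
  set d := f.order.toNat
  have hcoeff : constantCoeff g ≠ 0 := by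
    rwa [hg, coeff_X_pow_mul', if_pos le_rfl, Nat.sub_self,
      coeff_zero_eq_constantCoeff_apply] at hlead
  rcases hP _ hcoeff with h | h
  · exact Or.inl ⟨_, g, hg, h⟩
  · exact Or.inr ⟨_, -g, by rw [hg, mul_neg], by simpa using h⟩

theorem mk_neg_pow_mul_one_add_X_mul_C (a : A) :
    mk (fun n => (-a) ^ n) * (1 + X * C a) = 1 := by
  ext (_ | n)
  · simp
  · simp [mul_add, ← mul_assoc, coeff_succ_mul_X, pow_succ]

theorem one_add_X_mul_C_mul_mk_neg_pow (a : A) :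
    (1 + X * C a) * mk (fun n => (-a) ^ n) = 1 := by
  ext (_ | n)
  · simp
  · simp [add_mul, mul_assoc, coeff_succ_X_mul, pow_succ']

noncomputable def oneAddXMulCUnit (a : A) : A⟦X⟧ˣ :=
  ⟨1 + X * C a, mk fun n => (-a) ^ n, one_add_X_mul_C_mul_mk_neg_pow a,
    mk_neg_pow_mul_one_add_X_mul_C a⟩

end Ring

section MonoidAlgebra

variable {R M : Type*} [Semiring R] [Monoid M]

theorem exists_mul_eq_of_coeff_mul_ne_zero {f g : (MonoidAlgebra R M)⟦X⟧} {n : ℕ}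
    {t : M} (h : (coeff n (f * g)).coeff t ≠ 0) :
    ∃ j k u v, j + k = n ∧ (coeff j f).coeff u ≠ 0 ∧ (coeff k g).coeff v ≠ 0 ∧ u * v = t := by
  classical
  rw [coeff_mul, MonoidAlgebra.coeff_sum, Finset.sum_apply'] at h
  obtain ⟨⟨j, k⟩, hjk, hne⟩ := Finset.exists_ne_zero_of_sum_ne_zero h
  obtain ⟨u, v, hu, hv, huv⟩ := MonoidAlgebra.exists_mul_eq_of_coeff_mul_ne_zero hne
  exact ⟨j, k, u, v, Finset.HasAntidiagonal.mem_antidiagonal.mp hjk, hu, hv, huv⟩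

end MonoidAlgebra

variable {E A : Type*} [Group E] [Ring A]

theorem isPositiveCone_lowestCoeffIs_sub_one {Φ : E →* A⟦X⟧ˣ}
    (hΦ : Function.Injective Φ) {N : Subgroup E}
    (hN : ∀ w ∈ N, constantCoeff (Φ w : A⟦X⟧) = 1) {P : A → Prop} (hP0 : ¬ P 0)
    (hadd : ∀ {a b}, P a → P b → P (a + b)) (htotal : ∀ a, a ≠ 0 → P a ∨ P (-a))
    (hconj : ∀ g a, P a → P (constantCoeff (Φ g : A⟦X⟧) * a * constantCoeff (Φ g⁻¹ : A⟦X⟧))) :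
    IsPositiveCone N fun w => LowestCoeffIs P ((Φ w : A⟦X⟧) - 1) where
  not_one := by simpa using not_lowestCoeffIs_zero hP0
  mul := by
    intro a b ha _ hpa hpb
    have e : (Φ (a * b) : A⟦X⟧) - 1 = ((Φ a : A⟦X⟧) - 1) + Φ a * ((Φ b : A⟦X⟧) - 1) * 1 := by
      simp only [map_mul, Units.val_mul]
      noncomm_ring
    rw [e]
    exact hpa.add hadd (hpb.mul_mul fun x hx => by simpa [hN a ha] using hx)
  conj := by
    intro a g _ hpa
    have e : (Φ (g * a * g⁻¹) : A⟦X⟧) - 1 = Φ g * ((Φ a : A⟦X⟧) - 1) * Φ g⁻¹ := by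
      simp only [map_mul, map_inv, Units.val_mul, mul_sub, sub_mul, mul_one, Units.mul_inv]
    rw [e]
    exact hpa.mul_mul (hconj g)
  total := by
    intro a ha ha1
    have hne : (Φ a : A⟦X⟧) - 1 ≠ 0 := sub_ne_zero.mpr <|
      Units.val_eq_one.not.mpr <| (map_ne_one_iff Φ hΦ).mpr ha1
    refine (lowestCoeffIs_or_lowestCoeffIs_neg htotal hne).imp id fun h => ?_
    have e : (Φ a⁻¹ : A⟦X⟧) - 1 = Φ a⁻¹ * -((Φ a : A⟦X⟧) - 1) * 1 := by
      simp only [map_inv, mul_sub, Units.inv_mul, mul_one, neg_sub]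
    rw [e]
    exact h.mul_mul fun x hx => by simpa only [hN _ (inv_mem ha), map_one, one_mul, mul_one]

end PowerSeries

/-- `⟨[(h₀, s₁), …, (hₙ₋₁, sₙ)], hₙ⟩` encodes the word `h₀ s₁ h₁ ⋯ sₙ hₙ` of the free product of
`H` with the free monoid on `Bool`. -/
structure SepWord (H : Type*) where
  pairs : List (H × Bool)
  last : H

namespace SepWord

variable {H : Type*}

def seps (t : SepWord H) : List Bool := t.pairs.map Prod.snd

def entries (t : SepWord H) : List H := t.pairs.map Prod.fst ++ [t.last]

theorem ext_seps_entries {t u : SepWord H} (hs : t.seps = u.seps) (he : t.entries = u.entries) :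
    t = u := by
  obtain ⟨L, h⟩ := t
  obtain ⟨M, i⟩ := u
  have hlen : (L.map Prod.fst).length = (M.map Prod.fst).length := by
    simpa [seps] using congrArg List.length hs
  obtain ⟨hfst, hlast⟩ := List.append_inj he hlen
  simp only [List.cons.injEq, and_true] at hlast
  have hL : L = M := by
    rw [← List.zip_unzip L, ← List.zip_unzip M, List.unzip_fst, List.unzip_snd,
      List.unzip_fst, List.unzip_snd, hfst]
    exact congrArg _ hs
  rw [hL, hlast]

def Lt (r : H → H → Prop) : SepWord H → SepWord H → Prop :=
  InvImage (Prod.Lex (List.Lex (· < ·)) (List.Lex r)) fun t => (t.seps, t.entries)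

theorem isStrictTotalOrder_lt (r : H → H → Prop) [IsStrictTotalOrder H r] :
    IsStrictTotalOrder (SepWord H) (Lt r) := by
  have := List.Lex.isStrictTotalOrder (α := Bool) (· < ·)
  have := List.Lex.isStrictTotalOrder r
  have : IsStrictTotalOrder (List Bool × List H) (Prod.Lex (List.Lex (· < ·)) (List.Lex r)) := {}
  refine @IsStrictTotalOrder.mk _ _ (InvImage.trichotomous fun t u h => ?_)
    { irrefl := fun t => irrefl (t.seps, t.entries)
      trans := fun _ _ _ => @_root_.trans _ (Prod.Lex (List.Lex (· < ·)) (List.Lex r)) _ _ _ _ }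
  simp only [Prod.mk.injEq] at h
  exact ext_seps_entries h.1 h.2

section Monoid

variable [Monoid H]

instance : One (SepWord H) := ⟨⟨[], 1⟩⟩

instance : Mul (SepWord H) where
  mul
    | ⟨L, h⟩, ⟨[], h'⟩ => ⟨L, h * h'⟩
    | ⟨L, h⟩, ⟨(k, s) :: M, h'⟩ => ⟨L ++ (h * k, s) :: M, h'⟩

theorem one_def : (1 : SepWord H) = ⟨[], 1⟩ := rfl

theorem mk_mul_mk_nil (L : List (H × Bool)) (h h' : H) :
    (⟨L, h⟩ : SepWord H) * ⟨[], h'⟩ = ⟨L, h * h'⟩ := rfl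

theorem mk_mul_mk_cons (L : List (H × Bool)) (h k : H) (s : Bool) (M : List (H × Bool))
    (h' : H) : (⟨L, h⟩ : SepWord H) * ⟨(k, s) :: M, h'⟩ = ⟨L ++ (h * k, s) :: M, h'⟩ := rfl

instance : Monoid (SepWord H) where
  one_mul := by
    rintro ⟨_ | ⟨⟨k, s⟩, M⟩, h⟩ <;> simp [one_def, mk_mul_mk_nil, mk_mul_mk_cons]
  mul_one := by
    rintro ⟨L, h⟩
    simp [one_def, mk_mul_mk_nil]
  mul_assoc := by
    rintro ⟨L, h⟩ ⟨_ | ⟨⟨m, s⟩, M⟩, i⟩ ⟨_ | ⟨⟨n, u⟩, N⟩, j⟩ <;>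
      simp [mk_mul_mk_nil, mk_mul_mk_cons, mul_assoc]

def of : H →* SepWord H where
  toFun h := ⟨[], h⟩
  map_one' := rfl
  map_mul' _ _ := rfl

def sep (s : Bool) : SepWord H := ⟨[(1, s)], 1⟩

theorem seps_mul (t u : SepWord H) : (t * u).seps = t.seps ++ u.seps := by
  obtain ⟨L, h⟩ := t
  rcases u with ⟨_ | ⟨⟨k, s⟩, M⟩, h'⟩ <;> simp [seps, mk_mul_mk_nil, mk_mul_mk_cons]

theorem seps_of (h : H) : (of h).seps = [] := rfl

theorem pairs_mul_eq_append (t u : SepWord H) : ∃ M, (t * u).pairs = t.pairs ++ M := by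
  obtain ⟨L, h⟩ := t
  rcases u with ⟨_ | ⟨⟨k, s⟩, M⟩, h'⟩
  · exact ⟨[], by simp [mk_mul_mk_nil]⟩
  · exact ⟨_, by rw [mk_mul_mk_cons]⟩

theorem pairs_sep_mul (s : Bool) (t : SepWord H) : ∃ M, (sep s * t).pairs = (1, s) :: M :=
  pairs_mul_eq_append (sep s) t

theorem pairs_of_mul_sep_mul (h : H) (s : Bool) (t : SepWord H) :
    ∃ M, (of h * sep s * t).pairs = (h, s) :: M := by
  obtain ⟨M, hM⟩ := pairs_mul_eq_append (of h * sep s) t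
  rw [hM]
  exact ⟨M, by simp [of, sep, mk_mul_mk_cons]⟩

theorem entries_of_mul (a : H) (t : SepWord H) :
    (of a * t).entries = t.entries.modifyHead (a * ·) := by
  rcases t with ⟨_ | ⟨⟨k, s⟩, M⟩, h⟩ <;> rfl

theorem sep_pow (s : Bool) (n : ℕ) : (sep s : SepWord H) ^ n = ⟨List.replicate n (1, s), 1⟩ := by
  induction n with
  | zero => rfl
  | succ n ih =>
    rw [pow_succ, ih, sep, mk_mul_mk_cons, List.replicate_succ', one_mul]

theorem sep_pow_mul_of (s : Bool) (n : ℕ) (h : H) :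
    (sep s : SepWord H) ^ n * of h = ⟨List.replicate n (1, s), h⟩ := by
  rw [sep_pow, of, MonoidHom.coe_mk, OneHom.coe_mk, mk_mul_mk_nil, one_mul]

theorem sep_pow_mul_of_mul_sep (s : Bool) (n : ℕ) (h : H) :
    (sep s : SepWord H) ^ n * of h * sep s = ⟨List.replicate n (1, s) ++ [(h, s)], 1⟩ := by
  rw [sep_pow_mul_of, sep, mk_mul_mk_cons, mul_one]

variable {r : H → H → Prop}

theorem Lt.of_mul (hr : ∀ a b c : H, r a b → r (c * a) (c * b)) {t u : SepWord H}
    (h : Lt r t u) (c : H) : Lt r (of c * t) (of c * u) := by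
  simp only [Lt, InvImage, Prod.lex_def, seps_mul, seps_of, List.nil_append,
    entries_of_mul] at h ⊢
  exact h.imp_right (And.imp_right (List.Lex.modifyHead (hr · · c)))

theorem Lt.mul_of (hr : ∀ a b c : H, r a b → r (a * c) (b * c)) {t u : SepWord H}
    (h : Lt r t u) (c : H) : Lt r (t * of c) (u * of c) := by
  simp only [Lt, InvImage, Prod.lex_def, seps_mul, seps_of, List.append_nil] at h ⊢
  refine h.imp_right fun ⟨hs, he⟩ => ⟨hs, ?_⟩
  have hlen : (t.pairs.map Prod.fst).length = (u.pairs.map Prod.fst).length := by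
    simpa [seps] using congrArg List.length hs
  exact List.Lex.append_singleton_map (hr · · c) hlen he

end Monoid

section Group

variable [Group H]

instance : IsLeftCancelMul (SepWord H) where
  mul_left_cancel := by
    rintro ⟨L, h⟩ ⟨_ | ⟨⟨k, s⟩, M⟩, i⟩ ⟨_ | ⟨⟨k', s'⟩, M'⟩, i'⟩ he <;>
      simp_all [mk_mul_mk_nil, mk_mul_mk_cons]

open PowerSeries
open MonoidAlgebra (single single_mul_single single_neg single_pow eq_of_coeff_single_ne_zero)

noncomputable def constUnit : H →* (MonoidAlgebra ℤ (SepWord H))⟦X⟧ˣ :=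
  (Units.map ((C.toMonoidHom).comp ((MonoidAlgebra.of ℤ _).comp of))).comp toUnits.toMonoidHom

noncomputable def sepUnit (s : Bool) : (MonoidAlgebra ℤ (SepWord H))⟦X⟧ˣ :=
  oneAddXMulCUnit (single (sep s) 1)

noncomputable def letterHom (s : Bool) : H →* (MonoidAlgebra ℤ (SepWord H))⟦X⟧ˣ :=
  (MulAut.conj (sepUnit s)⁻¹).toMonoidHom.comp constUnit

theorem coe_letterHom (s : Bool) (h : H) :
    (letterHom s h : (MonoidAlgebra ℤ (SepWord H))⟦X⟧) =
      PowerSeries.mk (fun n => (-single (sep s) 1) ^ n) * C (single (of h) 1) *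
        (1 + X * C (single (sep s) 1)) := by
  simp [letterHom, constUnit, sepUnit, oneAddXMulCUnit]

theorem coeff_zero_letterHom (s : Bool) (h : H) :
    coeff 0 (letterHom s h : (MonoidAlgebra ℤ (SepWord H))⟦X⟧) = single (of h) 1 := by
  simp [coe_letterHom, mul_add]

theorem coeff_succ_letterHom (s : Bool) (h : H) (n : ℕ) :
    coeff (n + 1) (letterHom s h : (MonoidAlgebra ℤ (SepWord H))⟦X⟧) =
      single (sep s ^ (n + 1) * of h) ((-1) ^ (n + 1)) +
        single (sep s ^ n * of h * sep s) ((-1) ^ n) := by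
  simp only [coe_letterHom, mul_add, mul_one, map_add, ← mul_assoc, coeff_mul_C,
    coeff_succ_mul_X, coeff_mk, ← single_neg, single_pow, single_mul_single]

theorem seps_of_coeff_letterHom_ne_zero {s : Bool} {h : H} {n : ℕ} {t : SepWord H}
    (ht : (coeff n (letterHom s h : (MonoidAlgebra ℤ (SepWord H))⟦X⟧)).coeff t ≠ 0) :
    t.seps = List.replicate n s := by
  rcases n with _ | n
  · rw [coeff_zero_letterHom] at ht
    rw [eq_of_coeff_single_ne_zero ht]
    rfl
  · rw [coeff_succ_letterHom, MonoidAlgebra.coeff_add, Finsupp.add_apply] at ht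
    by_cases h₁ : (single (sep s ^ (n + 1) * of h) ((-1 : ℤ) ^ (n + 1))).coeff t = 0
    · rw [h₁, zero_add] at ht
      rw [eq_of_coeff_single_ne_zero ht, sep_pow_mul_of_mul_sep]
      simp [seps, List.replicate_succ']
    · rw [eq_of_coeff_single_ne_zero h₁, sep_pow_mul_of]
      simp [seps]

end Group

end SepWord

namespace Monoid.Coprod

variable {F G : Type*} [Group F] [Group G]

def ofLetter : F ⊕ G → Monoid.Coprod F G := Sum.elim inl inr

def letterVal : F ⊕ G → F × G := Sum.elim (fun f => (f, 1)) (fun g => (1, g))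

def IsReducedWord (l : List (F ⊕ G)) : Prop :=
  l.IsChain (fun a b => a.isLeft ≠ b.isLeft) ∧ ∀ L ∈ l, letterVal L ≠ 1

theorem ofLetter_eq_one {L : F ⊕ G} (hL : letterVal L = 1) : ofLetter L = 1 := by
  rcases L with f | g
  · simp [ofLetter, show f = 1 from congrArg Prod.fst hL]
  · simp [ofLetter, show g = 1 from congrArg Prod.snd hL]

theorem exists_letter_mul_letter {L L₁ : F ⊕ G} (h : L.isLeft = L₁.isLeft) :
    ∃ M : F ⊕ G, M.isLeft = L₁.isLeft ∧ ofLetter M = ofLetter L * ofLetter L₁ := by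
  rcases L with f | g <;> rcases L₁ with f₁ | g₁ <;> simp at h
  · exact ⟨.inl (f * f₁), rfl, map_mul _ _ _⟩
  · exact ⟨.inr (g * g₁), rfl, map_mul _ _ _⟩

theorem IsReducedWord.tail {L : F ⊕ G} {l : List (F ⊕ G)} (h : IsReducedWord (L :: l)) :
    IsReducedWord l :=
  ⟨h.1.tail, fun M hM => h.2 M (List.mem_cons_of_mem _ hM)⟩

theorem IsReducedWord.exists_cons (L : F ⊕ G) {l : List (F ⊕ G)} (hl : IsReducedWord l) :
    ∃ l', IsReducedWord l' ∧ (l'.map ofLetter).prod = ofLetter L * (l.map ofLetter).prod := by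
  by_cases hL : letterVal L = 1
  · exact ⟨l, hl, by rw [ofLetter_eq_one hL, one_mul]⟩
  rcases l with _ | ⟨L₁, l⟩
  · exact ⟨[L], ⟨List.isChain_singleton L, by simpa using hL⟩, by simp⟩
  by_cases htype : L.isLeft = L₁.isLeft
  · obtain ⟨M, hM, hmul⟩ := exists_letter_mul_letter htype
    by_cases hM1 : letterVal M = 1
    · refine ⟨l, hl.tail, ?_⟩
      rw [List.map_cons, List.prod_cons, ← mul_assoc, ← hmul, ofLetter_eq_one hM1, one_mul]
    · refine ⟨M :: l, ⟨?_, ?_⟩, by simp [hmul, mul_assoc]⟩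
      · rcases l with _ | ⟨L₂, l⟩
        · exact List.isChain_singleton M
        · exact List.isChain_cons_cons.mpr ⟨hM ▸ (List.isChain_cons_cons.mp hl.1).1,
            (List.isChain_cons_cons.mp hl.1).2⟩
      · simpa [hM1] using hl.tail.2
  · exact ⟨L :: L₁ :: l, ⟨List.isChain_cons_cons.mpr ⟨htype, hl.1⟩, by simpa [hL] using hl.2⟩,
      by simp⟩

theorem exists_isReducedWord (w : Monoid.Coprod F G) :
    ∃ l, IsReducedWord l ∧ (l.map ofLetter).prod = w := by
  induction w using Monoid.Coprod.induction_on' with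
  | one => exact ⟨[], ⟨List.isChain_nil, by simp⟩, rfl⟩
  | inl_mul f w ih =>
    obtain ⟨l, hl, rfl⟩ := ih
    exact (hl.exists_cons (.inl f)).imp fun _ h => ⟨h.1, h.2⟩
  | inr_mul g w ih =>
    obtain ⟨l, hl, rfl⟩ := ih
    exact (hl.exists_cons (.inr g)).imp fun _ h => ⟨h.1, h.2⟩

open PowerSeries SepWord
open MonoidAlgebra (single eq_of_coeff_single_ne_zero)

noncomputable def magnus : Monoid.Coprod F G →* (MonoidAlgebra ℤ (SepWord (F × G)))⟦X⟧ˣ :=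
  lift ((letterHom true).comp (MonoidHom.inl F G)) ((letterHom false).comp (MonoidHom.inr F G))

theorem magnus_ofLetter (L : F ⊕ G) : magnus (ofLetter L) = letterHom L.isLeft (letterVal L) := by
  rcases L with f | g <;> rfl

theorem constantCoeff_magnus (w : Monoid.Coprod F G) :
    constantCoeff (magnus w : (MonoidAlgebra ℤ (SepWord (F × G)))⟦X⟧) =
      single (SepWord.of (canonicalMap F G w)) 1 := by
  suffices (constantCoeff.toMonoidHom.comp ((Units.coeHom _).comp magnus)) =
      ((MonoidAlgebra.of ℤ _).comp (SepWord.of.comp (canonicalMap F G))) from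
    DFunLike.congr_fun this w
  apply hom_ext <;> ext x <;>
    simp [magnus, canonicalMap, ← coeff_zero_eq_constantCoeff_apply, coeff_zero_letterHom]

theorem runs_seps_le_of_coeff_magnus_ne_zero (l : List (F ⊕ G)) {n : ℕ} {t : SepWord (F × G)}
    (ht : (coeff n (magnus (l.map ofLetter).prod :
      (MonoidAlgebra ℤ (SepWord (F × G)))⟦X⟧)).coeff t ≠ 0) :
    t.seps.runs ≤ l.length := by
  induction l generalizing n t with
  | nil =>
    rcases n with _ | n
    · rw [List.map_nil, List.prod_nil, map_one, Units.val_one, coeff_zero_one,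
        MonoidAlgebra.one_def] at ht
      rw [eq_of_coeff_single_ne_zero ht]
      rfl
    · simp at ht
  | cons L l ih =>
    rw [List.map_cons, List.prod_cons, map_mul, Units.val_mul, magnus_ofLetter] at ht
    obtain ⟨j, k, u, v, -, hu, hv, rfl⟩ := exists_mul_eq_of_coeff_mul_ne_zero ht
    calc (u * v).seps.runs ≤ u.seps.runs + v.seps.runs := by
          rw [seps_mul]; exact List.runs_append_le _ _
      _ ≤ 1 + l.length := by
          rw [seps_of_coeff_letterHom_ne_zero hu]
          have := List.runs_replicate_le j L.isLeft
          have := ih hv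
          omega
      _ = (L :: l).length := by simp [add_comm]

def letterWord (l : List (F ⊕ G)) : SepWord (F × G) :=
  (l.map fun L => SepWord.of (letterVal L) * sep L.isLeft).prod

theorem seps_letterWord (l : List (F ⊕ G)) : (letterWord l).seps = l.map Sum.isLeft := by
  induction l with
  | nil => rfl
  | cons L l ih =>
    rw [letterWord, List.map_cons, List.prod_cons, seps_mul, ← letterWord, ih]
    rfl

theorem coeff_magnus_letterWord {l : List (F ⊕ G)} (hl : IsReducedWord l) :
    (coeff l.length (magnus (l.map ofLetter).prod :
      (MonoidAlgebra ℤ (SepWord (F × G)))⟦X⟧)).coeff (letterWord l) = 1 := by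
  induction l with
  | nil => simp [letterWord, MonoidAlgebra.one_def]
  | cons L l ih =>
    have hL : letterVal L ≠ 1 := hl.2 L List.mem_cons_self
    have hchain : ((L :: l).map Sum.isLeft).IsChain (· ≠ ·) := (List.isChain_map _).mpr hl.1
    have hword : letterWord (L :: l) = SepWord.of (letterVal L) * sep L.isLeft * letterWord l :=
      rfl
    rw [List.map_cons, List.prod_cons, map_mul, Units.val_mul, magnus_ofLetter, coeff_mul,
      MonoidAlgebra.coeff_sum, Finset.sum_apply', List.length_cons,
      Finset.sum_eq_single (1, l.length)]
    · have hcoeff : coeff 1 (letterHom L.isLeft (letterVal L) :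
          (MonoidAlgebra ℤ (SepWord (F × G)))⟦X⟧) =
          single (sep L.isLeft * SepWord.of (letterVal L)) (-1) +
            single (SepWord.of (letterVal L) * sep L.isLeft) 1 := by
        simpa using coeff_succ_letterHom L.isLeft (letterVal L) 0
      have hmismatch : ∀ d, sep L.isLeft * SepWord.of (letterVal L) * d ≠
          SepWord.of (letterVal L) * sep L.isLeft * letterWord l := by
        intro d hd
        obtain ⟨M, hM⟩ := pairs_sep_mul L.isLeft (SepWord.of (letterVal L) * d)
        obtain ⟨M', hM'⟩ := pairs_of_mul_sep_mul (letterVal L) L.isLeft (letterWord l)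
        rw [← mul_assoc, hd, hM'] at hM
        exact hL (Prod.ext_iff.mp (List.cons.inj hM).1).1
      rw [hcoeff, add_mul, MonoidAlgebra.coeff_add, Finsupp.add_apply, hword,
        MonoidAlgebra.coeff_single_mul_of_forall_mul_ne _ _ hmismatch,
        MonoidAlgebra.coeff_single_mul_eq_mul_coeff (letterWord l)
          (fun _ _ => mul_left_cancel_iff), ih hl.tail, zero_add, one_mul]
    -- The first letter contributes a block of `j` equal separators and the others at most
    -- `l.length` runs of separators, while the separators of `letterWord` alternate.
    · rintro ⟨j, k⟩ hjk hne
      by_contra hv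
      obtain ⟨u, v, hu, hv, huv⟩ := MonoidAlgebra.exists_mul_eq_of_coeff_mul_ne_zero hv
      have hseps := congrArg seps huv
      rw [seps_mul, seps_of_coeff_letterHom_ne_zero hu, seps_letterWord] at hseps
      have hruns := runs_seps_le_of_coeff_magnus_ne_zero l hv
      have hjk : j + k = l.length + 1 := Finset.HasAntidiagonal.mem_antidiagonal.mp hjk
      rcases j with _ | _ | j
      · rw [List.replicate_zero, List.nil_append] at hseps
        rw [hseps, List.runs_eq_length_of_isChain_ne hchain] at hruns
        simp at hruns
      · exact hne (by rw [Prod.mk.injEq]; omega)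
      · rcases l with _ | ⟨L₁, l⟩
        · simp at hjk
          omega
        · simp [List.replicate_succ] at hseps
          exact (List.isChain_cons_cons.mp hl.1).1 hseps.1
    · intro h
      exact absurd (Finset.HasAntidiagonal.mem_antidiagonal.mpr (by omega)) h

theorem magnus_injective : Function.Injective
    (magnus : Monoid.Coprod F G →* (MonoidAlgebra ℤ (SepWord (F × G)))⟦X⟧ˣ) := by
  refine (injective_iff_map_eq_one magnus).mpr fun w hw => ?_
  obtain ⟨l, hl, rfl⟩ := exists_isReducedWord w
  rcases l with _ | ⟨L, l⟩
  · rfl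
  · have h := coeff_magnus_letterWord hl
    rw [hw, Units.val_one, coeff_one, if_neg (by simp)] at h
    exact absurd h (by simp)

def TopWordPos (ltF : F → F → Prop) (ltG : G → G → Prop)
    (x : MonoidAlgebra ℤ (SepWord (F × G))) : Prop :=
  Finsupp.TopCoeffPos (SepWord.Lt (Prod.Lex ltF ltG)) x.coeff

def kernelCone (ltF : F → F → Prop) (ltG : G → G → Prop) (w : Monoid.Coprod F G) : Prop :=
  LowestCoeffIs (TopWordPos ltF ltG) ((magnus w : (MonoidAlgebra ℤ (SepWord (F × G)))⟦X⟧) - 1)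

def lexCone (ltF : F → F → Prop) (ltG : G → G → Prop) : Monoid.Coprod F G → Prop :=
  IsPositiveCone.lex (canonicalMap F G) (Prod.Lex ltF ltG 1) (kernelCone ltF ltG)

variable {ltF : F → F → Prop} {ltG : G → G → Prop}

theorem isPositiveCone_kernelCone (hF : IsBiOrder ltF) (hG : IsBiOrder ltG) :
    IsPositiveCone (canonicalMap F G).ker (kernelCone ltF ltG) := by
  have hH := hF.prodLex hG
  have := hH.1
  have := isStrictTotalOrder_lt (Prod.Lex ltF ltG)
  have hN : ∀ w ∈ (canonicalMap F G).ker,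
      constantCoeff (magnus w : (MonoidAlgebra ℤ (SepWord (F × G)))⟦X⟧) = 1 := fun w hw => by
    rw [constantCoeff_magnus, hw, map_one, MonoidAlgebra.one_def]
  have htotal : ∀ x, x ≠ 0 → TopWordPos ltF ltG x ∨ TopWordPos ltF ltG (-x) :=
    fun x hx => Finsupp.topCoeffPos_or_topCoeffPos_neg (MonoidAlgebra.coeff_eq_zero.not.mpr hx)
  have hconj : ∀ (g : Monoid.Coprod F G) x, TopWordPos ltF ltG x → TopWordPos ltF ltG
      (constantCoeff (magnus g : (MonoidAlgebra ℤ (SepWord (F × G)))⟦X⟧) * x *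
        constantCoeff (magnus g⁻¹ : (MonoidAlgebra ℤ (SepWord (F × G)))⟦X⟧)) := fun g x hx => by
    rw [constantCoeff_magnus, constantCoeff_magnus, MonoidAlgebra.single_one_mul_eq_mapDomain,
      MonoidAlgebra.mul_single_one_eq_mapDomain]
    exact (hx.mapDomain fun _ _ h => h.of_mul hH.2.2 _).mapDomain fun _ _ h => h.mul_of hH.2.1 _
  exact isPositiveCone_lowestCoeffIs_sub_one (A := MonoidAlgebra ℤ (SepWord (F × G)))
    magnus_injective hN Finsupp.not_topCoeffPos_zero (fun ha hb => ha.add hb) htotal hconj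

theorem lexCone_inl_iff (hF : IsBiOrder ltF) (hG : IsBiOrder ltG) (x : F) :
    lexCone ltF ltG (inl x) ↔ ltF 1 x := by
  have := hG.1
  have hx : canonicalMap F G (inl x) = (x, 1) := rfl
  rw [lexCone, IsPositiveCone.lex_iff (isPositiveCone_kernelCone hF hG), hx, Prod.lex_def]
  · simp [irrefl]
  · intro h
    rw [hx, Prod.mk_eq_one] at h
    rw [h.1, map_one]

theorem lexCone_inr_iff (hF : IsBiOrder ltF) (hG : IsBiOrder ltG) (y : G) :
    lexCone ltF ltG (inr y) ↔ ltG 1 y := by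
  have := hF.1
  have hy : canonicalMap F G (inr y) = (1, y) := rfl
  rw [lexCone, IsPositiveCone.lex_iff (isPositiveCone_kernelCone hF hG), hy, Prod.lex_def]
  · simp [irrefl]
  · intro h
    rw [hy, Prod.mk_eq_one] at h
    rw [h.2, map_one]

end Monoid.Coprod

/-- The free product of two ordered groups admits a bi-invariant ordering extending the
given orderings for which the kernel of the canonical homomorphism `F * G → F × G`
is a convex subgroup. -/
theorem canonical_map_kernel_convex {F G : Type*} [Group F] [Group G]
    (ltF : F → F → Prop) (ltG : G → G → Prop)
    (hF : IsBiOrder ltF) (hG : IsBiOrder ltG) :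
    ∃ lt : Monoid.Coprod F G → Monoid.Coprod F G → Prop,
      IsBiOrder lt ∧
      (∀ x y : F, ltF x y ↔ lt (Monoid.Coprod.inl x) (Monoid.Coprod.inl y)) ∧
      (∀ x y : G, ltG x y ↔ lt (Monoid.Coprod.inr x) (Monoid.Coprod.inr y)) ∧
      ∀ c c' x : Monoid.Coprod F G,
        c ∈ (canonicalMap F G).ker → c' ∈ (canonicalMap F G).ker →
        lt c x → lt x c' → x ∈ (canonicalMap F G).ker := by
  have hQ := (hF.prodLex hG).isPositiveCone
  have hK := Monoid.Coprod.isPositiveCone_kernelCone hF hG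
  refine ⟨fun x y => Monoid.Coprod.lexCone ltF ltG (x⁻¹ * y),
    (hQ.isPositiveCone_lex hK).isBiOrder, fun x y => ?_, fun x y => ?_,
    fun c c' x hc hc' h h' => hQ.map_eq_one_of_lex_of_lex hc hc' h h'⟩
  · change _ ↔ Monoid.Coprod.lexCone ltF ltG ((Monoid.Coprod.inl x)⁻¹ * Monoid.Coprod.inl y)
    rw [← map_inv, ← map_mul, Monoid.Coprod.lexCone_inl_iff hF hG, hF.lt_iff_one_lt_inv_mul]
  · change _ ↔ Monoid.Coprod.lexCone ltF ltG ((Monoid.Coprod.inr x)⁻¹ * Monoid.Coprod.inr y)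
    rw [← map_inv, ← map_mul, Monoid.Coprod.lexCone_inr_iff hF hG, hG.lt_iff_one_lt_inv_mul]
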